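/- Let N ≥ 1 and J ≥ 2 be integers, let τ > 0, let π₀ lie in the interior of the probability simplex in ℝ^N, and for each j ∈ [J] let c^j ∈ ℝ^N with c^j_i ≥ 0 for all i and ‖c^j‖₂ ≤ R. Define f_j(y; z) = ⟨softmax(log π₀ + (z+y)/τ), c^j − y⟩. Let y^{j,(t)} ∈ [0, c^j] (componentwise box) for j ∈ [J] and t = 0, 1, …, T, set Y^{-j,(t)} = Σ_{k≠j} y^{k,(t)}, and assume the exact best-response property: for every j and every t ≥ 1, f_j(y^{j,(t)}; Y^{-j,(t−1)}) ≥ f_j(ȳ; Y^{-j,(t−1)}) for all ȳ ∈ [0, c^j]. Fix reference points y^{j*} ∈ [0, c^j] and set a_t = max_{j∈[J]} ‖y^{j,(t)} − y^{j*}‖₂. Then for every j ∈ [J] and every ȳ ∈ [0, c^j], Σ_{t=1}^T [f_j(ȳ; Y^{-j,(t)}) − f_j(y^{j,(t)}; Y^{-j,(t)})] ≤ 2·(R/τ + 1)·(J−1)·Σ_{t=1}^T (a_t + a_{t−1}). -/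

import Mathlib

/-!
By the best-response property at the previous aggregate `Y^{-j,(t-1)}`, the regret at round `t`
is at most the change of `f_j(ȳ; ·)` plus the change of `f_j(y^{j,(t)}; ·)` between
`Y^{-j,(t-1)}` and `Y^{-j,(t)}`. Along a segment `u + s d`, the derivative of `⟨softmax u, w⟩`
is the softmax-weighted covariance of `w` and `d`, which weighted Cauchy–Schwarz bounds by
`max |w_i| · ‖d‖₂`; since `|c_i − y_i| ≤ R` on the box, `f_j(y; ·)` is `(R/τ)`-Lipschitz.
Finally the aggregate moves by at most `(J−1)(a_t + a_{t−1})`, by the triangle inequality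
through the reference points `y^{k*}`.
-/

open Finset

/-- `softmax(u)_i = exp(u_i) / Σ_j exp(u_j)`. -/
noncomputable def softmax {N : ℕ} (u : Fin N → ℝ) : Fin N → ℝ :=
  fun i => Real.exp (u i) / ∑ j, Real.exp (u j)

/-- Principal's utility `f(y; z) = ⟨softmax(log π₀ + (z+y)/τ), c − y⟩`. -/
noncomputable def util {N : ℕ} (τ : ℝ) (π₀ c : Fin N → ℝ) (y z : Fin N → ℝ) : ℝ :=
  ∑ i, softmax (fun i => Real.log (π₀ i) + (z i + y i) / τ) i * (c i - y i)

open Real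

section Euclidean

variable {ι : Type*} [Fintype ι]

lemma sqrt_sum_sq_sub_eq_dist (v w : ι → ℝ) :
    √(∑ i, (v i - w i) ^ 2) = dist (WithLp.toLp 2 v) (WithLp.toLp 2 w) := by
  simp [EuclideanSpace.dist_eq, Real.dist_eq, sq_abs]

lemma abs_le_sqrt_sum_sq (v : ι → ℝ) (i : ι) : |v i| ≤ √(∑ k, v k ^ 2) :=
  Real.abs_le_sqrt (single_le_sum (fun k _ => sq_nonneg (v k)) (mem_univ i))

lemma abs_sub_le_of_mem_box {c b : ι → ℝ} {R : ℝ} (hc : √(∑ i, c i ^ 2) ≤ R)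
    (hb : ∀ i, 0 ≤ b i ∧ b i ≤ c i) (i : ι) : |c i - b i| ≤ R := by
  rw [abs_of_nonneg (sub_nonneg.2 (hb i).2)]
  linarith [(hb i).1, le_abs_self (c i), abs_le_sqrt_sum_sq c i]

end Euclidean

lemma dist_sum_sum_le_card_mul {ι E : Type*} [SeminormedAddCommGroup E] (s : Finset ι)
    {x x' x₀ : ι → E} {r r' : ℝ} (hx : ∀ k ∈ s, dist (x k) (x₀ k) ≤ r)
    (hx' : ∀ k ∈ s, dist (x' k) (x₀ k) ≤ r') :
    dist (∑ k ∈ s, x k) (∑ k ∈ s, x' k) ≤ #s * (r + r') :=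
  calc dist (∑ k ∈ s, x k) (∑ k ∈ s, x' k) ≤ ∑ k ∈ s, (r + r') :=
        dist_sum_sum_le_of_le s fun k hk =>
          (dist_triangle_right _ _ (x₀ k)).trans (add_le_add (hx k hk) (hx' k hk))
    _ = #s * (r + r') := by rw [sum_const, nsmul_eq_mul]

section Covariance

variable {ι : Type*} [Fintype ι] {σ : ι → ℝ}

lemma sum_mul_sq_sub_mean_le (hσ1 : ∑ i, σ i = 1) (x : ι → ℝ) :
    ∑ i, σ i * (x i - ∑ k, σ k * x k) ^ 2 ≤ ∑ i, σ i * x i ^ 2 := by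
  set m := ∑ k, σ k * x k
  have hexpand : ∑ i, σ i * (x i - m) ^ 2
      = ∑ i, σ i * x i ^ 2 - 2 * m * m + m ^ 2 * ∑ i, σ i :=
    calc ∑ i, σ i * (x i - m) ^ 2
        = ∑ i, (σ i * x i ^ 2 - 2 * m * (σ i * x i) + m ^ 2 * σ i) :=
          sum_congr rfl fun i _ => by ring
      _ = _ := by rw [sum_add_distrib, sum_sub_distrib, ← mul_sum, ← mul_sum]
  rw [hexpand, hσ1]
  nlinarith [sq_nonneg m]

lemma sum_mul_sq_le_sum_sq (hσ0 : ∀ i, 0 ≤ σ i) (hσ1 : ∑ i, σ i = 1) (x : ι → ℝ) :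
    ∑ i, σ i * x i ^ 2 ≤ ∑ i, x i ^ 2 :=
  sum_le_sum fun i _ => mul_le_of_le_one_left (sq_nonneg _)
    (hσ1 ▸ single_le_sum (fun k _ => hσ0 k) (mem_univ i))

lemma abs_covariance_le (hσ0 : ∀ i, 0 ≤ σ i) (hσ1 : ∑ i, σ i = 1) {w : ι → ℝ} {R : ℝ}
    (hw : ∀ i, |w i| ≤ R) (d : ι → ℝ) :
    |∑ i, σ i * (w i * d i) - (∑ i, σ i * w i) * ∑ i, σ i * d i| ≤ R * √(∑ i, d i ^ 2) := by
  obtain ⟨i₀, -⟩ := exists_ne_zero_of_sum_ne_zero (hσ1.trans_ne one_ne_zero)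
  have hR : 0 ≤ R := (abs_nonneg _).trans (hw i₀)
  set m := ∑ i, σ i * d i
  have hcentered : ∑ i, σ i * (w i * d i) - (∑ i, σ i * w i) * m
      = ∑ i, σ i * w i * (d i - m) := by
    rw [sum_mul, ← sum_sub_distrib]
    exact sum_congr rfl fun i _ => by ring
  -- weighted Cauchy–Schwarz: the `σ`-covariance is at most `√(E_σ w²) · √(Var_σ d)`
  have hcs := sum_sq_le_sum_mul_sum_of_sq_le_mul univ
    (r := fun i => σ i * w i * (d i - m)) (f := fun i => σ i * w i ^ 2)
    (g := fun i => σ i * (d i - m) ^ 2)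
    (fun i _ => mul_nonneg (hσ0 i) (sq_nonneg _))
    (fun i _ => mul_nonneg (hσ0 i) (sq_nonneg _))
    (fun i _ => le_of_eq (by ring))
  have hw2 : ∑ i, σ i * w i ^ 2 ≤ R ^ 2 := by
    calc ∑ i, σ i * w i ^ 2 ≤ ∑ i, σ i * R ^ 2 := sum_le_sum fun i _ =>
          mul_le_mul_of_nonneg_left (sq_le_sq' (abs_le.1 (hw i)).1 (abs_le.1 (hw i)).2)
            (hσ0 i)
      _ = R ^ 2 := by rw [← sum_mul, hσ1, one_mul]
  have hvar : ∑ i, σ i * (d i - m) ^ 2 ≤ ∑ i, d i ^ 2 :=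
    (sum_mul_sq_sub_mean_le hσ1 d).trans (sum_mul_sq_le_sum_sq hσ0 hσ1 d)
  rw [hcentered, ← Real.sqrt_sq hR, ← Real.sqrt_mul (sq_nonneg R)]
  exact Real.abs_le_sqrt (hcs.trans (mul_le_mul hw2 hvar
    (sum_nonneg fun i _ => mul_nonneg (hσ0 i) (sq_nonneg _)) (sq_nonneg R)))

end Covariance

section Softmax

variable {N : ℕ}

lemma softmax_nonneg (u : Fin N → ℝ) (i : Fin N) : 0 ≤ softmax u i :=
  div_nonneg (exp_pos _).le (sum_nonneg fun _ _ => (exp_pos _).le)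

lemma sum_softmax [NeZero N] (u : Fin N → ℝ) : ∑ i, softmax u i = 1 := by
  simp only [softmax, ← sum_div]
  exact div_self (sum_pos (fun j _ => exp_pos _) univ_nonempty).ne'

lemma hasDerivAt_sum_softmax_mul [NeZero N] (u d w : Fin N → ℝ) (t : ℝ) :
    HasDerivAt (fun s : ℝ => ∑ i, softmax (u + s • d) i * w i)
      (∑ i, softmax (u + t • d) i * (w i * d i) -
        (∑ i, softmax (u + t • d) i * w i) * ∑ i, softmax (u + t • d) i * d i) t := by
  have hexp : ∀ i, HasDerivAt (fun s => exp (u i + s * d i)) (exp (u i + t * d i) * d i) t :=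
    fun i => by simpa using (((hasDerivAt_id t).mul_const (d i)).const_add (u i)).exp
  have hZ := HasDerivAt.fun_sum (u := univ) fun i _ => hexp i
  have hA := HasDerivAt.fun_sum (u := univ) fun i _ => (hexp i).mul_const (w i)
  have hZpos : 0 < ∑ i, exp (u i + t * d i) := sum_pos (fun i _ => exp_pos _) univ_nonempty
  have hquot : (fun s : ℝ => ∑ i, softmax (u + s • d) i * w i)
      = fun s => (∑ i, exp (u i + s * d i) * w i) / ∑ i, exp (u i + s * d i) := by
    funext s
    simp only [softmax, Pi.add_apply, Pi.smul_apply, smul_eq_mul, div_mul_eq_mul_div, ← sum_div]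
  rw [hquot]
  refine (hA.div hZ hZpos.ne').congr_deriv ?_
  simp only [softmax, Pi.add_apply, Pi.smul_apply, smul_eq_mul, div_mul_eq_mul_div, ← sum_div]
  field_simp

lemma abs_sum_softmax_mul_sub_le {w : Fin N → ℝ} {R : ℝ} (hw : ∀ i, |w i| ≤ R)
    (u v : Fin N → ℝ) :
    |∑ i, softmax v i * w i - ∑ i, softmax u i * w i| ≤ R * √(∑ i, (v i - u i) ^ 2) := by
  cases N with
  | zero => simp
  | succ n =>
    simpa using norm_image_sub_le_of_norm_deriv_le_segment_01'
      (fun t _ => (hasDerivAt_sum_softmax_mul u (v - u) w t).hasDerivWithinAt)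
      (fun t _ => abs_covariance_le (softmax_nonneg _) (sum_softmax _) hw (v - u))

end Softmax

lemma util_sub_util_le {N : ℕ} {τ : ℝ} (hτ : 0 < τ) (π₀ : Fin N → ℝ) {c y : Fin N → ℝ}
    {R : ℝ} (hy : ∀ i, |c i - y i| ≤ R) (z z' : Fin N → ℝ) :
    util τ π₀ c y z - util τ π₀ c y z' ≤ R / τ * √(∑ i, (z i - z' i) ^ 2) := by
  have h := abs_sum_softmax_mul_sub_le hy (fun i => log (π₀ i) + (z' i + y i) / τ)
    (fun i => log (π₀ i) + (z i + y i) / τ)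
  have hscale :
      √(∑ i, ((log (π₀ i) + (z i + y i) / τ) - (log (π₀ i) + (z' i + y i) / τ)) ^ 2)
        = √(∑ i, (z i - z' i) ^ 2) / τ := by
    simp_rw [show ∀ i, (log (π₀ i) + (z i + y i) / τ) - (log (π₀ i) + (z' i + y i) / τ)
      = (z i - z' i) / τ from fun i => by ring, div_pow, ← sum_div,
      Real.sqrt_div' _ (sq_nonneg τ), Real.sqrt_sq hτ.le]
  rw [hscale, mul_div_assoc'] at h
  exact (le_abs_self _).trans (h.trans_eq (mul_div_right_comm _ _ _))

lemma util_regret_le_of_best_response {N : ℕ} {τ : ℝ} (hτ : 0 < τ) (π₀ : Fin N → ℝ)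
    {c ybar y z z' : Fin N → ℝ} {R : ℝ} (hybar : ∀ i, |c i - ybar i| ≤ R)
    (hy : ∀ i, |c i - y i| ≤ R) (hbr : util τ π₀ c ybar z' ≤ util τ π₀ c y z') :
    util τ π₀ c ybar z - util τ π₀ c y z ≤ 2 * (R / τ) * √(∑ i, (z i - z' i) ^ 2) := by
  have hybar_shift := util_sub_util_le hτ π₀ hybar z z'
  have hy_shift := util_sub_util_le hτ π₀ hy z' z
  rw [sqrt_sum_sq_sub_eq_dist, dist_comm, ← sqrt_sum_sq_sub_eq_dist] at hy_shift
  linarith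

theorem stmt_14_general (N J : ℕ) (τ : ℝ) (hτ : 0 < τ)
    (π₀ : Fin N → ℝ)
    (c : Fin J → Fin N → ℝ) (R : ℝ)
    (hcR : ∀ j, Real.sqrt (∑ i, (c j i) ^ 2) ≤ R)
    (y : ℕ → Fin J → Fin N → ℝ)
    (hybox : ∀ t j i, 0 ≤ y t j i ∧ y t j i ≤ c j i)
    (Ym : ℕ → Fin J → Fin N → ℝ)
    (hYm : ∀ t j, Ym t j = ∑ k ∈ Finset.univ.erase j, y t k)
    (hbr : ∀ t : ℕ, 1 ≤ t → ∀ j, ∀ ybar : Fin N → ℝ,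
      (∀ i, 0 ≤ ybar i ∧ ybar i ≤ c j i) →
      util τ π₀ (c j) ybar (Ym (t - 1) j) ≤ util τ π₀ (c j) (y t j) (Ym (t - 1) j))
    (ystar : Fin J → Fin N → ℝ)
    (a : ℕ → ℝ)
    (ha : ∀ t, a t = ⨆ j, Real.sqrt (∑ i, (y t j i - ystar j i) ^ 2)) :
    ∀ T : ℕ, ∀ j, ∀ ybar : Fin N → ℝ, (∀ i, 0 ≤ ybar i ∧ ybar i ≤ c j i) →
      ∑ t ∈ Finset.Icc 1 T,
          (util τ π₀ (c j) ybar (Ym t j) - util τ π₀ (c j) (y t j) (Ym t j)) ≤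
        2 * (R / τ + 1) * ((J : ℝ) - 1) * ∑ t ∈ Finset.Icc 1 T, (a t + a (t - 1)) := by
  intro T j ybar hybar
  have hL : 0 ≤ R / τ + 1 := by
    have hR : 0 ≤ R := (Real.sqrt_nonneg _).trans (hcR j)
    positivity
  have hdist : ∀ t k, dist (WithLp.toLp 2 (y t k)) (WithLp.toLp 2 (ystar k)) ≤ a t := by
    intro t k
    rw [← sqrt_sum_sq_sub_eq_dist, ha]
    exact le_ciSup (f := fun k => √(∑ i, (y t k i - ystar k i) ^ 2))
      (Set.finite_range _).bddAbove k
  have hdrift : ∀ t,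
      √(∑ i, (Ym t j i - Ym (t - 1) j i) ^ 2) ≤ ((J : ℝ) - 1) * (a t + a (t - 1)) := by
    intro t
    have hcard : (#(univ.erase j) : ℝ) = J - 1 := by
      rw [card_erase_of_mem (mem_univ j), card_univ, Fintype.card_fin, Nat.cast_pred j.pos]
    rw [sqrt_sum_sq_sub_eq_dist, hYm, hYm, WithLp.toLp_sum, WithLp.toLp_sum, ← hcard]
    exact dist_sum_sum_le_card_mul _ (fun k _ => hdist t k) (fun k _ => hdist (t - 1) k)
  rw [mul_sum]
  refine sum_le_sum fun t ht => ?_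
  calc util τ π₀ (c j) ybar (Ym t j) - util τ π₀ (c j) (y t j) (Ym t j)
      ≤ 2 * (R / τ) * √(∑ i, (Ym t j i - Ym (t - 1) j i) ^ 2) :=
        util_regret_le_of_best_response hτ π₀ (abs_sub_le_of_mem_box (hcR j) hybar)
          (abs_sub_le_of_mem_box (hcR j) (hybox t j)) (hbr t (mem_Icc.1 ht).1 j ybar hybar)
    _ ≤ 2 * (R / τ + 1) * (((J : ℝ) - 1) * (a t + a (t - 1))) := by
        gcongr
        · linarith
        · exact hdrift t
    _ = 2 * (R / τ + 1) * ((J : ℝ) - 1) * (a t + a (t - 1)) := by ring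

/-- Regret bound for the exact-best-response Jacobi dynamics of the common-agency
alignment game: each principal's cumulative regret against any fixed comparator in
its box is bounded by `2(R/τ+1)(J−1) Σ_t (a_t + a_{t−1})`. -/
theorem stmt_14 (N J : ℕ) (hN : 1 ≤ N) (hJ : 2 ≤ J) (τ : ℝ) (hτ : 0 < τ)
    (π₀ : Fin N → ℝ) (hπ₀pos : ∀ i, 0 < π₀ i) (hπ₀sum : ∑ i, π₀ i = 1)
    (c : Fin J → Fin N → ℝ) (R : ℝ)
    (hc0 : ∀ j i, 0 ≤ c j i) (hcR : ∀ j, Real.sqrt (∑ i, (c j i) ^ 2) ≤ R)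
    (y : ℕ → Fin J → Fin N → ℝ)
    (hybox : ∀ t j i, 0 ≤ y t j i ∧ y t j i ≤ c j i)
    (Ym : ℕ → Fin J → Fin N → ℝ)
    (hYm : ∀ t j, Ym t j = ∑ k ∈ Finset.univ.erase j, y t k)
    (hbr : ∀ t : ℕ, 1 ≤ t → ∀ j, ∀ ybar : Fin N → ℝ,
      (∀ i, 0 ≤ ybar i ∧ ybar i ≤ c j i) →
      util τ π₀ (c j) ybar (Ym (t - 1) j) ≤ util τ π₀ (c j) (y t j) (Ym (t - 1) j))
    (ystar : Fin J → Fin N → ℝ)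
    (hystar : ∀ j i, 0 ≤ ystar j i ∧ ystar j i ≤ c j i)
    (a : ℕ → ℝ)
    (ha : ∀ t, a t = ⨆ j, Real.sqrt (∑ i, (y t j i - ystar j i) ^ 2)) :
    ∀ T : ℕ, ∀ j, ∀ ybar : Fin N → ℝ, (∀ i, 0 ≤ ybar i ∧ ybar i ≤ c j i) →
      ∑ t ∈ Finset.Icc 1 T,
          (util τ π₀ (c j) ybar (Ym t j) - util τ π₀ (c j) (y t j) (Ym t j)) ≤
        2 * (R / τ + 1) * ((J : ℝ) - 1) * ∑ t ∈ Finset.Icc 1 T, (a t + a (t - 1)) :=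
  stmt_14_general N J τ hτ π₀ c R hcR y hybox Ym hYm hbr ystar a ha
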